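/- Let M ∈ M_{2,2}(L) have eigenvalues 0 and 1 with eigenvectors v₁, v₂ satisfying ⟨v₁,v₁⟩ = ⟨v₂,v₂⟩ = 0 and ⟨v₁,v₂⟩ = 1. Then Num(M) = {t ∈ L : t + σ(t) = 1}. -/

import Mathlib

/-!
Since `σ` is an involution, `herm σ` is a Hermitian form, and in the hyperbolic basis `v₁, v₂`
(which spans the plane, as it is linearly independent) it reads
`⟨x v₁ + y v₂, x' v₁ + y' v₂⟩ = σ(x) y' + σ(y) x'`. Writing `u = x v₁ + y v₂`, we get `M u = y v₂`,
so `⟨u, u⟩ = t + σ(t)` and `⟨u, M u⟩ = t` for `t = σ(x) y`. Conversely `u = v₁ + t v₂` realises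
any `t` with `t + σ(t) = 1`.
-/

open scoped BigOperators

variable {K L : Type*}

/-- The sesquilinear form associated to `σ`. -/
def herm [Field K] [Field L] [Algebra K L] (σ : L ≃ₐ[K] L) {ι : Type*} [Fintype ι]
    (u v : ι → L) : L := ∑ i, σ (u i) * v i

/-- The numerical range of a matrix with respect to `σ`. -/
def NumRange [Field K] [Field L] [Algebra K L] (σ : L ≃ₐ[K] L) {ι : Type*} [Fintype ι]
    (M : Matrix ι ι L) : Set L :=
  {z | ∃ u : ι → L, herm σ u u = 1 ∧ herm σ u (M.mulVec u) = z}

/-- The σ-conjugate transpose. -/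
def dagger [Field K] [Field L] [Algebra K L] (σ : L ≃ₐ[K] L) {ι : Type*}
    (M : Matrix ι ι L) : Matrix ι ι L := Matrix.of fun i j => σ (M j i)

section Herm

variable [Field K] [Field L] [Algebra K L] (σ : L ≃ₐ[K] L) {ι : Type*} [Fintype ι]

theorem herm_add_left (u v w : ι → L) : herm σ (u + v) w = herm σ u w + herm σ v w := by
  simp only [herm, Pi.add_apply, map_add, add_mul, Finset.sum_add_distrib]

theorem herm_add_right (u v w : ι → L) : herm σ u (v + w) = herm σ u v + herm σ u w := by
  simp only [herm, Pi.add_apply, mul_add, Finset.sum_add_distrib]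

theorem herm_smul_left (c : L) (u v : ι → L) : herm σ (c • u) v = σ c * herm σ u v := by
  simp only [herm, Pi.smul_apply, smul_eq_mul, map_mul, Finset.mul_sum, mul_assoc]

theorem herm_smul_right (c : L) (u v : ι → L) : herm σ u (c • v) = c * herm σ u v := by
  simp only [herm, Pi.smul_apply, smul_eq_mul, Finset.mul_sum, mul_left_comm]

theorem herm_zero_right (u : ι → L) : herm σ u 0 = 0 := by
  simp [herm]

theorem herm_swap (hinv : ∀ a : L, σ (σ a) = a) (u v : ι → L) :
    herm σ v u = σ (herm σ u v) := by
  simp only [herm, map_sum, map_mul, hinv, mul_comm]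

structure IsHyperbolicPair (v₁ v₂ : ι → L) : Prop where
  herm_left_self : herm σ v₁ v₁ = 0
  herm_right_self : herm σ v₂ v₂ = 0
  herm_left_right : herm σ v₁ v₂ = 1

namespace IsHyperbolicPair

variable {σ} {v₁ v₂ : ι → L} (hinv : ∀ a : L, σ (σ a) = a) (h : IsHyperbolicPair σ v₁ v₂)
include hinv h

theorem herm_smul_add_smul (x y x' y' : L) :
    herm σ (x • v₁ + y • v₂) (x' • v₁ + y' • v₂) = σ x * y' + σ y * x' := by
  have h21 : herm σ v₂ v₁ = 1 := by rw [herm_swap σ hinv, h.herm_left_right, map_one]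
  simp only [herm_add_left, herm_add_right, herm_smul_left, herm_smul_right, h.herm_left_self,
    h.herm_right_self, h.herm_left_right, h21]
  ring

theorem linearIndependent : LinearIndependent L ![v₁, v₂] := by
  refine LinearIndependent.pair_iff.mpr fun s t hst => ⟨?_, ?_⟩
  · simpa [hst, herm_zero_right] using (h.herm_smul_add_smul hinv 0 1 s t).symm
  · simpa [hst, herm_zero_right] using (h.herm_smul_add_smul hinv 1 0 s t).symm

theorem exists_smul_add_smul_eq (hι : Fintype.card ι = 2) (u : ι → L) :
    ∃ x y : L, x • v₁ + y • v₂ = u := by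
  have hspan := (h.linearIndependent hinv).span_eq_top_of_card_eq_finrank
    (by rw [Module.finrank_fintype_fun_eq_card, hι, Fintype.card_fin])
  rw [Matrix.range_cons_cons_empty] at hspan
  exact Submodule.mem_span_pair.mp (hspan ▸ Submodule.mem_top)

end IsHyperbolicPair

end Herm

theorem stmt_18_general [Field K] [Field L] [Algebra K L] (σ : L ≃ₐ[K] L)
    (hinv : ∀ a : L, σ (σ a) = a) (M : Matrix (Fin 2) (Fin 2) L)
    (v₁ v₂ : Fin 2 → L)
    (h1 : M.mulVec v₁ = 0) (h2 : M.mulVec v₂ = v₂)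
    (hn1 : herm σ v₁ v₁ = 0) (hn2 : herm σ v₂ v₂ = 0) (h12 : herm σ v₁ v₂ = 1) :
    NumRange σ M = {t : L | t + σ t = 1} := by
  have hyp : IsHyperbolicPair σ v₁ v₂ := ⟨hn1, hn2, h12⟩
  have hM (x y : L) : M.mulVec (x • v₁ + y • v₂) = (0 : L) • v₁ + y • v₂ := by
    rw [Matrix.mulVec_add, Matrix.mulVec_smul, Matrix.mulVec_smul, h1, h2, smul_zero, zero_smul]
  ext t
  constructor
  · rintro ⟨u, hu, rfl⟩
    obtain ⟨x, y, rfl⟩ := hyp.exists_smul_add_smul_eq hinv (Fintype.card_fin 2) u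
    rw [hyp.herm_smul_add_smul hinv] at hu
    rw [hM, hyp.herm_smul_add_smul hinv, mul_zero, add_zero, Set.mem_ofPred_eq, map_mul, hinv]
    linear_combination hu
  · intro (ht : t + σ t = 1)
    refine ⟨(1 : L) • v₁ + t • v₂, ?_, ?_⟩
    · rw [hyp.herm_smul_add_smul hinv, map_one]
      linear_combination ht
    · rw [hM, hyp.herm_smul_add_smul hinv, map_one]
      ring

theorem stmt_18 [Field K] [Field L] [Algebra K L] (σ : L ≃ₐ[K] L)
    (hinv : ∀ a : L, σ (σ a) = a) (M : Matrix (Fin 2) (Fin 2) L)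
    (v₁ v₂ : Fin 2 → L) (hv₁ : v₁ ≠ 0) (hv₂ : v₂ ≠ 0)
    (h1 : M.mulVec v₁ = 0) (h2 : M.mulVec v₂ = v₂)
    (hn1 : herm σ v₁ v₁ = 0) (hn2 : herm σ v₂ v₂ = 0) (h12 : herm σ v₁ v₂ = 1) :
    NumRange σ M = {t : L | t + σ t = 1} :=
  stmt_18_general σ hinv M v₁ v₂ h1 h2 hn1 hn2 h12
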